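/- arXiv:1203.6436 — 3 statements merged into one kernel-verified Lean document; each statement's English description precedes it below -/
import Mathlib

section
/- The Fock space representation of the oscillator algebra is irreducible: any nonzero subspace of F invariant under a⁺, a⁻ and k equals all of F. -/
noncomputable def aPlus (p : ℝ) (v : ℕ → ℂ) : ℕ → ℂ := fun m =>
  match m with
  | 0 => 0
  | Nat.succ m => ((Real.sqrt (1 - p ^ (2 * m + 2)) : ℝ) : ℂ) * v m

noncomputable def aMinus (p : ℝ) (v : ℕ → ℂ) : ℕ → ℂ := fun m =>
  ((Real.sqrt (1 - p ^ (2 * m + 2)) : ℝ) : ℂ) * v (m + 1)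

noncomputable def kOp (p : ℝ) (v : ℕ → ℂ) : ℕ → ℂ := fun m =>
  ((p : ℂ) ^ m * ((Real.sqrt p : ℝ) : ℂ)) * v m

/-- The Fock space `F = ⊕_{m≥0} ℂ|m⟩`, i.e. the subspace of finitely
supported coefficient sequences. -/
noncomputable def FockSpace : Submodule ℂ (ℕ → ℂ) where
  carrier := {f | (Function.support f).Finite}
  add_mem' := fun hf hg => Set.Finite.subset (hf.union hg) (Function.support_add _ _)
  zero_mem' := by simp
  smul_mem' := fun c f hf => Set.Finite.subset hf (Function.support_const_smul_subset c f)

/-- Delta vector `|n⟩`. -/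
noncomputable def fockDelta (n : ℕ) : ℕ → ℂ := fun m => if m = n then 1 else 0

lemma sqrt_coef_ne (p : ℝ) (hp : 0 < p) (hp1 : p < 1) (n : ℕ) :
    ((Real.sqrt (1 - p ^ (2 * n + 2)) : ℝ) : ℂ) ≠ 0 := by
  have h1 : p ^ (2 * n + 2) < 1 := pow_lt_one₀ hp.le hp1 (by omega)
  have : (0:ℝ) < Real.sqrt (1 - p ^ (2 * n + 2)) := Real.sqrt_pos.mpr (by linarith)
  exact_mod_cast this.ne'

/-- Irreducibility of the Fock representation: any nonzero subspace of `F`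
invariant under `a⁺`, `a⁻` and `k` equals all of `F`. -/
theorem fock_irreducible (p : ℝ) (hp : 0 < p) (hp1 : p < 1)
    (U : Submodule ℂ (ℕ → ℂ)) (hU : U ≤ FockSpace)
    (haP : ∀ v ∈ U, aPlus p v ∈ U)
    (haM : ∀ v ∈ U, aMinus p v ∈ U)
    (hk : ∀ v ∈ U, kOp p v ∈ U)
    (hne : U ≠ ⊥) :
    U = FockSpace := by
  have hs : ((Real.sqrt p : ℝ) : ℂ) ≠ 0 := by
    have : (0:ℝ) < Real.sqrt p := Real.sqrt_pos.mpr hp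
    exact_mod_cast this.ne'
  -- eigenvalues of p-powers are distinct
  have hpow : ∀ {m j : ℕ}, m ≠ j → ((p:ℂ)^m - (p:ℂ)^j) ≠ 0 := by
    intro m j hmj h
    apply hmj
    apply (pow_right_strictAnti₀ hp hp1).injective
    have : ((p^m : ℝ) : ℂ) = ((p^j : ℝ) : ℂ) := by push_cast; linear_combination h
    exact_mod_cast this
  -- Step 1: eigenvector extraction via kOp
  have extract : ∀ v ∈ U, ∀ T : Finset ℕ,
      (fun m => (∏ j ∈ T, (((Real.sqrt p : ℝ) : ℂ) * ((p:ℂ)^m - (p:ℂ)^j))) * v m) ∈ U := by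
    intro v hv T
    induction T using Finset.induction_on with
    | empty => simpa using hv
    | @insert j T hj ih =>
      have h1 : kOp p (fun m => (∏ j ∈ T, (((Real.sqrt p : ℝ) : ℂ) * ((p:ℂ)^m - (p:ℂ)^j))) * v m)
          - ((p:ℂ)^j * ((Real.sqrt p : ℝ) : ℂ)) •
            (fun m => (∏ j ∈ T, (((Real.sqrt p : ℝ) : ℂ) * ((p:ℂ)^m - (p:ℂ)^j))) * v m) ∈ U :=
        U.sub_mem (hk _ ih) (U.smul_mem _ ih)
      convert h1 using 1
      funext m
      simp only [kOp, Pi.sub_apply, Pi.smul_apply, smul_eq_mul, Finset.prod_insert hj]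
      ring
  -- Step 2: some delta is in U
  obtain ⟨v, hv, hv0⟩ := Submodule.exists_mem_ne_zero_of_ne_bot hne
  have hvfin : (Function.support v).Finite := hU hv
  obtain ⟨n, hn⟩ : ∃ n, v n ≠ 0 := by
    by_contra h
    push_neg at h
    exact hv0 (funext h)
  set S := hvfin.toFinset with hS
  have hnS : n ∈ S := hvfin.mem_toFinset.mpr hn
  set T := S.erase n with hT
  set c : ℂ := (∏ j ∈ T, (((Real.sqrt p : ℝ) : ℂ) * ((p:ℂ)^n - (p:ℂ)^j))) * v n with hc
  have hcne : c ≠ 0 := by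
    apply mul_ne_zero _ hn
    apply Finset.prod_ne_zero_iff.mpr
    intro j hjm
    exact mul_ne_zero hs (hpow (Finset.ne_of_mem_erase hjm).symm)
  have key : (fun m => (∏ j ∈ T, (((Real.sqrt p : ℝ) : ℂ) * ((p:ℂ)^m - (p:ℂ)^j))) * v m)
      = c • fockDelta n := by
    funext m
    simp only [Pi.smul_apply, fockDelta, smul_eq_mul]
    by_cases hmn : m = n
    · subst hmn; simp [hc]
    · simp only [if_neg hmn, mul_zero]
      by_cases hmS : m ∈ S
      · have hmT : m ∈ T := Finset.mem_erase.mpr ⟨hmn, hmS⟩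
        rw [Finset.prod_eq_zero hmT (by simp), zero_mul]
      · have : v m = 0 := by
          by_contra h
          exact hmS (hvfin.mem_toFinset.mpr h)
        rw [this, mul_zero]
  have hdn : fockDelta n ∈ U := by
    have := extract v hv T
    rw [key] at this
    have := U.smul_mem c⁻¹ this
    rwa [smul_smul, inv_mul_cancel₀ hcne, one_smul] at this
  -- Step 3: from delta n, all deltas are in U
  -- downward: delta n → delta 0
  have down : ∀ k, fockDelta k ∈ U → k ≠ 0 → fockDelta (k - 1) ∈ U := by
    intro k hk0 hkne
    obtain ⟨k', rfl⟩ := Nat.exists_eq_succ_of_ne_zero hkne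
    have heq : aMinus p (fockDelta (k' + 1))
        = ((Real.sqrt (1 - p ^ (2 * k' + 2)) : ℝ) : ℂ) • fockDelta k' := by
      funext m
      simp only [aMinus, fockDelta, Pi.smul_apply, smul_eq_mul]
      by_cases hmk : m = k'
      · subst hmk; simp
      · simp [hmk, fun h => hmk (Nat.succ_injective h)]
    have h1 := haM _ hk0
    rw [heq] at h1
    have h2 := U.smul_mem (((Real.sqrt (1 - p ^ (2 * k' + 2)) : ℝ) : ℂ))⁻¹ h1
    rwa [smul_smul, inv_mul_cancel₀ (sqrt_coef_ne p hp hp1 k'), one_smul] at h2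
  have hd0 : ∀ k, fockDelta k ∈ U → fockDelta 0 ∈ U := by
    intro k
    induction k with
    | zero => exact id
    | succ k ih => exact fun h => ih (by simpa using down (k+1) h (Nat.succ_ne_zero k))
  have up : ∀ k, fockDelta k ∈ U → fockDelta (k + 1) ∈ U := by
    intro k hk0
    have heq : aPlus p (fockDelta k)
        = ((Real.sqrt (1 - p ^ (2 * k + 2)) : ℝ) : ℂ) • fockDelta (k + 1) := by
      funext m
      match m with
      | 0 => simp [aPlus, fockDelta]
      | Nat.succ m' =>
        simp only [aPlus, fockDelta, Pi.smul_apply, smul_eq_mul]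
        by_cases hmk : m' = k
        · subst hmk; simp
        · simp [hmk, fun h => hmk (Nat.succ_injective h)]
    have h1 := haP _ hk0
    rw [heq] at h1
    have h2 := U.smul_mem (((Real.sqrt (1 - p ^ (2 * k + 2)) : ℝ) : ℂ))⁻¹ h1
    rwa [smul_smul, inv_mul_cancel₀ (sqrt_coef_ne p hp hp1 k), one_smul] at h2
  have hall : ∀ m, fockDelta m ∈ U := by
    intro m
    induction m with
    | zero => exact hd0 n hdn
    | succ m ih => exact up m ih
  -- Step 4: conclude
  refine le_antisymm hU ?_
  intro f hf
  have hffin : (Function.support f).Finite := hf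
  have hrepr : f = ∑ m ∈ hffin.toFinset, f m • fockDelta m := by
    funext m
    rw [Finset.sum_apply]
    simp only [Pi.smul_apply, fockDelta, smul_eq_mul, mul_ite, mul_one, mul_zero]
    rw [Finset.sum_ite_eq hffin.toFinset m f]
    by_cases hmS : m ∈ hffin.toFinset
    · simp [hmS]
    · have : f m = 0 := by
        by_contra h
        exact hmS (hffin.mem_toFinset.mpr h)
      simp [hmS, this]
  rw [hrepr]
  exact Submodule.sum_mem U fun m _ => U.smul_mem _ (hall m)
end

section
/- The vector |χ₁(x)⟩ = Σ_{m≥0} x^m / (√((p;p)_m (-p;p)_m)) |m⟩ (equivalently |χ₁(x)⟩ = (x a⁺; p)_∞^{-1}|0⟩) satisfies (a⁺ - x⁻¹(1 - p^{-1/2} k)) |χ₁(x)⟩ = 0. -/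
/-- q-Pochhammer symbol `(a;q)_m = ∏_{i=1}^m (1 - a q^{i-1})`. -/
noncomputable def qPoch (a q : ℝ) (m : ℕ) : ℝ := ∏ i ∈ Finset.range m, (1 - a * q ^ i)

/-- The vector `|χ₁(x)⟩ = (x a⁺; p)_∞^{-1}|0⟩ = Σ_j x^j (a⁺)^j/(p;p)_j |0⟩`;
its coefficient on `|m⟩` is `x^m √((p²;p²)_m)/(p;p)_m`. -/
noncomputable def chi1 (p x : ℝ) : ℕ → ℂ := fun m =>
  (x : ℂ) ^ m * ((Real.sqrt (qPoch (p ^ 2) (p ^ 2) m) : ℝ) : ℂ) / ((qPoch p p m : ℝ) : ℂ)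

/-! On `|m⟩` the operator `1 - p^{-1/2} k` acts as `1 - p^m`, which kills `|0⟩`, while `a⁺` carries
`|m⟩` to `√(1 - p^{2m+2}) |m+1⟩`. So the claim is the recurrence
`(1 - p^{m+1}) χ_{m+1} = x √(1 - p^{2m+2}) χ_m` for the coefficients, which holds because
`(p;p)_{m+1} = (p;p)_m (1 - p^{m+1})` and, all factors being positive for `0 ≤ p < 1`,
`√((p²;p²)_{m+1}) = √((p²;p²)_m) √(1 - p^{2m+2})`. -/

lemma qPoch_succ (a q : ℝ) (m : ℕ) :
    qPoch a q (m + 1) = qPoch a q m * (1 - a * q ^ m) := by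
  simp [qPoch, Finset.prod_range_succ]

lemma one_sub_mul_pow_pos {a q : ℝ} (ha : a < 1) (hq0 : 0 ≤ q) (hq1 : q ≤ 1) (i : ℕ) :
    0 < 1 - a * q ^ i := by
  have hpow := pow_le_one₀ hq0 hq1 (n := i)
  rcases le_or_gt a 0 with ha0 | ha0
  · nlinarith [pow_nonneg hq0 i]
  · nlinarith

lemma qPoch_pos {a q : ℝ} (ha : a < 1) (hq0 : 0 ≤ q) (hq1 : q ≤ 1) (m : ℕ) :
    0 < qPoch a q m :=
  Finset.prod_pos fun i _ => one_sub_mul_pow_pos ha hq0 hq1 i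

lemma one_sub_pow_mul_chi1_succ {p : ℝ} (hp0 : 0 ≤ p) (hp1 : p < 1) (x : ℝ) (m : ℕ) :
    (1 - (p : ℂ) ^ (m + 1)) * chi1 p x (m + 1) =
      x * ((Real.sqrt (1 - p ^ (2 * m + 2)) : ℝ) : ℂ) * chi1 p x m := by
  have hp2 : p ^ 2 < 1 := by nlinarith
  have hfactor : ((1 - p * p ^ m : ℝ) : ℂ) ≠ 0 :=
    Complex.ofReal_ne_zero.mpr (one_sub_mul_pow_pos hp1 hp0 hp1.le m).ne'
  have hprod : ((qPoch p p m : ℝ) : ℂ) ≠ 0 :=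
    Complex.ofReal_ne_zero.mpr (qPoch_pos hp1 hp0 hp1.le m).ne'
  have hsqrt : Real.sqrt (qPoch (p ^ 2) (p ^ 2) (m + 1)) =
      Real.sqrt (qPoch (p ^ 2) (p ^ 2) m) * Real.sqrt (1 - p ^ (2 * m + 2)) := by
    rw [qPoch_succ, Real.sqrt_mul (qPoch_pos hp2 (by positivity) hp2.le m).le]
    ring_nf
  simp only [chi1, qPoch_succ p p m, hsqrt]
  push_cast at hfactor ⊢
  field_simp
  ring

lemma inv_sqrt_smul_kOp {p : ℝ} (hp : 0 < p) (v : ℕ → ℂ) :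
    ((Real.sqrt p : ℝ) : ℂ)⁻¹ • kOp p v = fun m => (p : ℂ) ^ m * v m := by
  have hsqrt : ((Real.sqrt p : ℝ) : ℂ) ≠ 0 := by simpa [Real.sqrt_eq_zero'] using hp
  funext m
  simp only [kOp, Pi.smul_apply, smul_eq_mul]
  field_simp

/-- `(a⁺ - x⁻¹(1 - p^{-1/2} k)) |χ₁(x)⟩ = 0`. -/
theorem chi1_aPlus_eq (p x : ℝ) (hp : 0 < p) (hp1 : p < 1) (hx : x ≠ 0) :
    aPlus p (chi1 p x) - ((x : ℂ))⁻¹ •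
      (chi1 p x - (((Real.sqrt p : ℝ) : ℂ))⁻¹ • kOp p (chi1 p x)) = 0 := by
  rw [inv_sqrt_smul_kOp hp]
  funext m
  rcases m with _ | m
  · simp [aPlus]
  · have hxC : (x : ℂ) ≠ 0 := Complex.ofReal_ne_zero.mpr hx
    have hrec := one_sub_pow_mul_chi1_succ hp.le hp1 x m
    simp only [aPlus, Pi.sub_apply, Pi.smul_apply, Pi.zero_apply, smul_eq_mul]
    rw [← one_sub_mul, hrec]
    field_simp
    ring
end

section
/- Given invertible operators R on F⊗F⊗F and L on F⊗V⊗V satisfying the tetrahedron equation R₁₂₃ L₁ₐᵦ L₂ₐ꜀ L₃ᵦ꜀ = L₃ᵦ꜀ L₂ₐ꜀ L₁ₐᵦ R₁₂₃, the n-fold composed operators 𝓛₁,𝐚,𝐛 = L₁,a₁,b₁···L₁,aₙ,bₙ (and analogously 𝓛₂,𝐚,𝐜, 𝓛₃,𝐛,𝐜) satisfy the n-layer tetrahedron equation R₁₂₃ 𝓛₁,𝐚,𝐛 𝓛₂,𝐚,𝐜 𝓛₃,𝐛,𝐜 = 𝓛₃,𝐛,𝐜 𝓛₂,𝐚,𝐜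 𝓛₁,𝐚,𝐛 R₁₂₃ on F⊗F⊗F⊗V^{⊗n}⊗V^{⊗n}⊗V^{⊗n}. -/
/-!
The one-layer tetrahedron equation implies the `n`-layer tetrahedron equation.
Vector spaces are modelled as free modules `ι →₀ K` (`F = α →₀ K`,
`V = β →₀ K`, `V^{⊗n} = (Fin n → β) →₀ K`), so that an operator acting on a
chosen group of tensor factors is obtained by conjugating with the evident
reindexing bijection and currying.
-/

/-- Lift an operator `M` acting on the factors indexed by `σ` to an operator on
the whole space `ι →₀ K`, via a bijection `ι ≃ ρ × σ` singling out those
factors (identity on the `ρ` part). -/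
noncomputable def liftOp {K ι ρ σ : Type*} [Field K] (e : ι ≃ ρ × σ)
    (M : Module.End K (σ →₀ K)) : Module.End K (ι →₀ K) :=
  ((Finsupp.domLCongr e).trans (Finsupp.finsuppProdLEquiv K)).symm.toLinearMap ∘ₗ
    Finsupp.mapRange.linearMap M ∘ₗ
      ((Finsupp.domLCongr e).trans (Finsupp.finsuppProdLEquiv K)).toLinearMap

section Equivs

variable (α β : Type*) {n : ℕ}

/-- Single out the factors `(F₁, V_a, V_b)` of `F⊗F⊗F⊗V⊗V⊗V`. -/
def e1 : (α × α × α × β × β × β) ≃ ((α × α × β) × (α × β × β)) :=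
  ⟨fun z => ((z.2.1, z.2.2.1, z.2.2.2.2.2), (z.1, z.2.2.2.1, z.2.2.2.2.1)),
   fun w => (w.2.1, w.1.1, w.1.2.1, w.2.2.1, w.2.2.2, w.1.2.2),
   fun _ => rfl, fun _ => rfl⟩

/-- Single out the factors `(F₂, V_a, V_c)`. -/
def e2 : (α × α × α × β × β × β) ≃ ((α × α × β) × (α × β × β)) :=
  ⟨fun z => ((z.1, z.2.2.1, z.2.2.2.2.1), (z.2.1, z.2.2.2.1, z.2.2.2.2.2)),
   fun w => (w.1.1, w.2.1, w.1.2.1, w.2.2.1, w.1.2.2, w.2.2.2),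
   fun _ => rfl, fun _ => rfl⟩

/-- Single out the factors `(F₃, V_b, V_c)`. -/
def e3 : (α × α × α × β × β × β) ≃ ((α × α × β) × (α × β × β)) :=
  ⟨fun z => ((z.1, z.2.1, z.2.2.2.1), (z.2.2.1, z.2.2.2.2.1, z.2.2.2.2.2)),
   fun w => (w.1.1, w.1.2.1, w.2.1, w.1.2.2, w.2.2.1, w.2.2.2),
   fun _ => rfl, fun _ => rfl⟩

/-- Single out the factors `(F₁, F₂, F₃)`. -/
def eR : (α × α × α × β × β × β) ≃ ((β × β × β) × (α × α × α)) :=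
  ⟨fun z => ((z.2.2.2.1, z.2.2.2.2.1, z.2.2.2.2.2), (z.1, z.2.1, z.2.2.1)),
   fun w => (w.2.1, w.2.2.1, w.2.2.2, w.1.1, w.1.2.1, w.1.2.2),
   fun _ => rfl, fun _ => rfl⟩

variable {β}

/-- Delete the `i`-th component of a tuple. -/
def del (i : Fin n) (a : Fin n → β) : {j : Fin n // j ≠ i} → β := fun j => a j

/-- Insert a value as the `i`-th component of a tuple. -/
def ins (i : Fin n) (x : β) (a : {j : Fin n // j ≠ i} → β) : Fin n → β :=
  fun j => if h : j = i then x else a ⟨j, h⟩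

@[simp] lemma ins_del (i : Fin n) (a : Fin n → β) : ins i (a i) (del i a) = a := by
  funext j
  by_cases h : j = i
  · subst h; simp [ins]
  · simp [ins, del, h]

@[simp] lemma del_ins (i : Fin n) (x : β) (a : {j : Fin n // j ≠ i} → β) :
    del i (ins i x a) = a := by
  funext j
  simp [del, ins, j.2]

@[simp] lemma ins_apply (i : Fin n) (x : β) (a : {j : Fin n // j ≠ i} → β) :
    ins i x a i = x := by simp [ins]

variable (β)

/-- Single out the factors `(F₁, V_{a_i}, V_{b_i})` of
`F⊗F⊗F⊗V^{⊗n}⊗V^{⊗n}⊗V^{⊗n}`. -/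
def E1 (i : Fin n) :
    (α × α × α × (Fin n → β) × (Fin n → β) × (Fin n → β)) ≃
      ((α × α × ({j : Fin n // j ≠ i} → β) × ({j : Fin n // j ≠ i} → β) × (Fin n → β)) ×
        (α × β × β)) where
  toFun z := ((z.2.1, z.2.2.1, del i z.2.2.2.1, del i z.2.2.2.2.1, z.2.2.2.2.2),
              (z.1, z.2.2.2.1 i, z.2.2.2.2.1 i))
  invFun w := (w.2.1, w.1.1, w.1.2.1, ins i w.2.2.1 w.1.2.2.1, ins i w.2.2.2 w.1.2.2.2.1,
               w.1.2.2.2.2)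
  left_inv z := by obtain ⟨f1, f2, f3, a, b, c⟩ := z; simp
  right_inv w := by obtain ⟨⟨f2, f3, a', b', c⟩, ⟨f1, ai, bi⟩⟩ := w; simp

/-- Single out the factors `(F₂, V_{a_i}, V_{c_i})`. -/
def E2 (i : Fin n) :
    (α × α × α × (Fin n → β) × (Fin n → β) × (Fin n → β)) ≃
      ((α × α × ({j : Fin n // j ≠ i} → β) × (Fin n → β) × ({j : Fin n // j ≠ i} → β)) ×
        (α × β × β)) where
  toFun z := ((z.1, z.2.2.1, del i z.2.2.2.1, z.2.2.2.2.1, del i z.2.2.2.2.2),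
              (z.2.1, z.2.2.2.1 i, z.2.2.2.2.2 i))
  invFun w := (w.1.1, w.2.1, w.1.2.1, ins i w.2.2.1 w.1.2.2.1, w.1.2.2.2.1,
               ins i w.2.2.2 w.1.2.2.2.2)
  left_inv z := by obtain ⟨f1, f2, f3, a, b, c⟩ := z; simp
  right_inv w := by obtain ⟨⟨f1, f3, a', b, c'⟩, ⟨f2, ai, ci⟩⟩ := w; simp

/-- Single out the factors `(F₃, V_{b_i}, V_{c_i})`. -/
def E3 (i : Fin n) :
    (α × α × α × (Fin n → β) × (Fin n → β) × (Fin n → β)) ≃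
      ((α × α × (Fin n → β) × ({j : Fin n // j ≠ i} → β) × ({j : Fin n // j ≠ i} → β)) ×
        (α × β × β)) where
  toFun z := ((z.1, z.2.1, z.2.2.2.1, del i z.2.2.2.2.1, del i z.2.2.2.2.2),
              (z.2.2.1, z.2.2.2.2.1 i, z.2.2.2.2.2 i))
  invFun w := (w.1.1, w.1.2.1, w.2.1, w.1.2.2.1, ins i w.2.2.1 w.1.2.2.2.1,
               ins i w.2.2.2 w.1.2.2.2.2)
  left_inv z := by obtain ⟨f1, f2, f3, a, b, c⟩ := z; simp
  right_inv w := by obtain ⟨⟨f1, f2, a, b', c'⟩, ⟨f3, bi, ci⟩⟩ := w; simp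

/-- Single out the factors `(F₁, F₂, F₃)` in the `n`-layer space. -/
def ERn :
    (α × α × α × (Fin n → β) × (Fin n → β) × (Fin n → β)) ≃
      (((Fin n → β) × (Fin n → β) × (Fin n → β)) × (α × α × α)) :=
  ⟨fun z => ((z.2.2.2.1, z.2.2.2.2.1, z.2.2.2.2.2), (z.1, z.2.1, z.2.2.1)),
   fun w => (w.2.1, w.2.2.1, w.2.2.2, w.1.1, w.1.2.1, w.1.2.2),
   fun _ => rfl, fun _ => rfl⟩

end Equivs

/-! ### Auxiliary lemmas -/

section Aux

lemma prodLEquiv_single {K ρ σ : Type*} [Field K] (p : ρ × σ) (c : K) :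
    Finsupp.finsuppProdLEquiv K (Finsupp.single p c)
      = Finsupp.single p.1 (Finsupp.single p.2 c) := by
  classical
  ext x y
  rw [show Finsupp.finsuppProdLEquiv K (Finsupp.single p c) x y = Finsupp.single p c (x, y) from Finsupp.curry_apply _ _ _]
  simp only [Finsupp.single_apply, Prod.ext_iff, ite_and,
    apply_ite (fun f : σ →₀ K => f y)]
  split_ifs <;> simp_all [Finsupp.single_apply]

lemma prodLEquiv_symm_single {K ρ σ : Type*} [Field K] (r : ρ) (g : σ →₀ K) :
    (Finsupp.finsuppProdLEquiv K).symm (Finsupp.single r g)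
      = g.mapDomain (Prod.mk r) := by
  induction g using Finsupp.induction_linear with
  | zero => simp
  | add f g hf hg => rw [Finsupp.single_add, map_add, hf, hg, Finsupp.mapDomain_add]
  | single s c =>
      rw [Finsupp.mapDomain_single, ← prodLEquiv_single (r, s) c, LinearEquiv.symm_apply_apply]

lemma liftOp_single {K ι ρ σ : Type*} [Field K] (e : ι ≃ ρ × σ)
    (M : Module.End K (σ →₀ K)) (i : ι) (c : K) :
    liftOp e M (Finsupp.single i c)
      = (M (Finsupp.single (e i).2 c)).mapDomain (fun s => e.symm ((e i).1, s)) := by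
  simp only [liftOp, LinearMap.coe_comp, Function.comp_apply, LinearEquiv.coe_coe,
    LinearEquiv.trans_apply, LinearEquiv.symm_trans_apply, Finsupp.domLCongr_apply,
    Finsupp.domCongr_apply, Finsupp.equivMapDomain_single, Finsupp.mapDomain_single,
    prodLEquiv_single, Finsupp.mapRange.linearMap_apply, Finsupp.mapRange_single,
    prodLEquiv_symm_single, Finsupp.domLCongr_symm, Finsupp.equivMapDomain_eq_mapDomain,
    ← Finsupp.mapDomain_comp]
  rfl

lemma liftOp_mul {K ι ρ σ : Type*} [Field K] (e : ι ≃ ρ × σ)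
    (M N : Module.End K (σ →₀ K)) :
    liftOp e (M * N) = liftOp e M * liftOp e N := by
  refine Finsupp.lhom_ext fun i c => ?_
  rw [Module.End.mul_apply, liftOp_single, liftOp_single]
  conv_rhs => rw [Finsupp.mapDomain, map_finsuppSum]
  simp_rw [liftOp_single, Equiv.apply_symm_apply]
  rw [← Finsupp.mapDomain_sum, ← map_finsuppSum, Finsupp.sum_single, Module.End.mul_apply]

lemma liftOp_liftOp {K ι ρ σ π τ ϖ : Type*} [Field K] (e : ι ≃ ρ × σ) (f : σ ≃ π × τ)
    (E : ι ≃ ϖ × τ) (M : Module.End K (τ →₀ K))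
    (h1 : ∀ i, (E i).2 = (f (e i).2).2)
    (h2 : ∀ i t, E.symm ((E i).1, t)
        = e.symm ((e i).1, f.symm ((f (e i).2).1, t))) :
    liftOp e (liftOp f M) = liftOp E M := by
  refine Finsupp.lhom_ext fun i c => ?_
  rw [liftOp_single, liftOp_single, liftOp_single, h1 i, funext (h2 i),
    ← Finsupp.mapDomain_comp]
  rfl

lemma liftOp_comm {K ι ρ σ ρ' σ' : Type*} [Field K] (e : ι ≃ ρ × σ) (e' : ι ≃ ρ' × σ')
    (M : Module.End K (σ →₀ K)) (M' : Module.End K (σ' →₀ K))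
    (h2 : ∀ i s, (e' (e.symm ((e i).1, s))).2 = (e' i).2)
    (h3 : ∀ i s', (e (e'.symm ((e' i).1, s'))).2 = (e i).2)
    (hχ : ∀ i s s', e.symm ((e (e'.symm ((e' i).1, s'))).1, s)
        = e'.symm ((e' (e.symm ((e i).1, s))).1, s')) :
    liftOp e M * liftOp e' M' = liftOp e' M' * liftOp e M := by
  refine Finsupp.lhom_ext fun i c => ?_
  obtain ⟨f, hf⟩ : ∃ f, ∀ v : K, M (Finsupp.single (e i).2 v) = v • f :=
    ⟨M (Finsupp.single (e i).2 1), fun v => by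
      rw [← map_smul, Finsupp.smul_single', mul_one]⟩
  obtain ⟨g, hg⟩ : ∃ g, ∀ v : K, M' (Finsupp.single (e' i).2 v) = v • g :=
    ⟨M' (Finsupp.single (e' i).2 1), fun v => by
      rw [← map_smul, Finsupp.smul_single', mul_one]⟩
  rw [Module.End.mul_apply, Module.End.mul_apply, liftOp_single e' M', liftOp_single e M,
    Finsupp.mapDomain, Finsupp.mapDomain, map_finsuppSum, map_finsuppSum]
  simp_rw [liftOp_single, h3, h2, hf, hg, Finsupp.mapDomain_smul]
  rw [Finsupp.sum_smul_index'
      (h := fun a b => b • Finsupp.mapDomain (fun s => e.symm ((e (e'.symm ((e' i).1, a))).1, s)) f)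
      (fun a => zero_smul K _),
    Finsupp.sum_smul_index'
      (h := fun a b => b • Finsupp.mapDomain (fun s => e'.symm ((e' (e.symm ((e i).1, a))).1, s)) g)
      (fun a => zero_smul K _)]
  simp_rw [Finsupp.mapDomain, Finsupp.smul_sum, Finsupp.smul_single, smul_eq_mul]
  rw [Finsupp.sum_comm]
  refine Finsupp.sum_congr fun s hs => Finsupp.sum_congr fun s' hs' => ?_
  rw [hχ i s s', mul_right_comm]

private lemma comm_left {M : Type*} [Monoid M] {x y : M} (h : Commute x y) (z : M) :
    x * (y * z) = y * (x * z) := by rw [← mul_assoc, h.eq, mul_assoc]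

lemma list_tetra {M : Type*} [Monoid M] : ∀ {n : ℕ} (a b c : Fin n → M) (r : M),
    (∀ i j, i ≠ j → Commute (a i) (b j)) →
    (∀ i j, i ≠ j → Commute (a i) (c j)) →
    (∀ i j, i ≠ j → Commute (b i) (c j)) →
    (∀ i, r * (a i * (b i * c i)) = c i * (b i * (a i * r))) →
    r * ((List.ofFn a).prod * ((List.ofFn b).prod * (List.ofFn c).prod))
      = (List.ofFn c).prod * ((List.ofFn b).prod * ((List.ofFn a).prod * r))
  | 0, a, b, c, r, _, _, _, _ => by simp
  | n + 1, a, b, c, r, hab, hac, hbc, h1 => by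
    rw [List.ofFn_succ, List.ofFn_succ, List.ofFn_succ, List.prod_cons, List.prod_cons,
      List.prod_cons]
    set A := (List.ofFn fun i : Fin n => a i.succ).prod with hA
    set B := (List.ofFn fun i : Fin n => b i.succ).prod with hB
    set C := (List.ofFn fun i : Fin n => c i.succ).prod with hC
    have HbA : Commute (b 0) A := Commute.list_prod_right _ _ (fun y hy => by
      obtain ⟨k, rfl⟩ := List.mem_ofFn.1 hy
      exact (hab k.succ 0 (Fin.succ_ne_zero k)).symm)
    have HcA : Commute (c 0) A := Commute.list_prod_right _ _ (fun y hy => by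
      obtain ⟨k, rfl⟩ := List.mem_ofFn.1 hy
      exact (hac k.succ 0 (Fin.succ_ne_zero k)).symm)
    have HcB : Commute (c 0) B := Commute.list_prod_right _ _ (fun y hy => by
      obtain ⟨k, rfl⟩ := List.mem_ofFn.1 hy
      exact (hbc k.succ 0 (Fin.succ_ne_zero k)).symm)
    have HaB : Commute (a 0) B := Commute.list_prod_right _ _ (fun y hy => by
      obtain ⟨k, rfl⟩ := List.mem_ofFn.1 hy
      exact hab 0 k.succ (Fin.succ_ne_zero k).symm)
    have HaC : Commute (a 0) C := Commute.list_prod_right _ _ (fun y hy => by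
      obtain ⟨k, rfl⟩ := List.mem_ofFn.1 hy
      exact hac 0 k.succ (Fin.succ_ne_zero k).symm)
    have HbC : Commute (b 0) C := Commute.list_prod_right _ _ (fun y hy => by
      obtain ⟨k, rfl⟩ := List.mem_ofFn.1 hy
      exact hbc 0 k.succ (Fin.succ_ne_zero k).symm)
    have ih := list_tetra (fun i : Fin n => a i.succ) (fun i => b i.succ)
      (fun i => c i.succ) r
      (fun i j hij => hab _ _ fun hh => hij (Fin.succ_injective _ hh))
      (fun i j hij => hac _ _ fun hh => hij (Fin.succ_injective _ hh))
      (fun i j hij => hbc _ _ fun hh => hij (Fin.succ_injective _ hh))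
      (fun i => h1 i.succ)
    have h1' : ∀ x, r * (a 0 * (b 0 * (c 0 * x))) = c 0 * (b 0 * (a 0 * (r * x))) := by
      intro x
      rw [show r * (a 0 * (b 0 * (c 0 * x))) = r * (a 0 * (b 0 * c 0)) * x by
        simp [mul_assoc], h1 0]
      simp [mul_assoc]
    simp only [mul_assoc]
    rw [comm_left HbA.symm, comm_left HcB.symm, comm_left HcA.symm, h1', ih,
      comm_left HaB.symm, comm_left HbC.symm, comm_left HaC.symm]

variable {n : ℕ} {β : Type*}

lemma ins_del_comm {i j : Fin n} (hij : i ≠ j) (x y : β) (a : Fin n → β) :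
    ins i x (del i (ins j y (del j a))) = ins j y (del j (ins i x (del i a))) := by
  funext k
  rcases eq_or_ne k i with rfl | hki
  · simp [ins, del, hij]
  · rcases eq_or_ne k j with rfl | hkj
    · simp [ins, del, hki]
    · simp [ins, del, hki, hkj]

/-- Single out the `i`-th layer: split `F⊗F⊗F⊗V^{⊗n}⊗V^{⊗n}⊗V^{⊗n}` as (rest) × (one-layer). -/
def Gn (α β : Type*) {n : ℕ} (i : Fin n) :
    (α × α × α × (Fin n → β) × (Fin n → β) × (Fin n → β)) ≃
      ((({j : Fin n // j ≠ i} → β) × ({j : Fin n // j ≠ i} → β) × ({j : Fin n // j ≠ i} → β)) ×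
        (α × α × α × β × β × β)) where
  toFun z := ((del i z.2.2.2.1, del i z.2.2.2.2.1, del i z.2.2.2.2.2),
    (z.1, z.2.1, z.2.2.1, z.2.2.2.1 i, z.2.2.2.2.1 i, z.2.2.2.2.2 i))
  invFun w := (w.2.1, w.2.2.1, w.2.2.2.1, ins i w.2.2.2.2.1 w.1.1,
    ins i w.2.2.2.2.2.1 w.1.2.1, ins i w.2.2.2.2.2.2 w.1.2.2)
  left_inv z := by obtain ⟨f1, f2, f3, a, b, c⟩ := z; simp
  right_inv w := by obtain ⟨⟨a, b, c⟩, ⟨f1, f2, f3, x, y, zz⟩⟩ := w; simp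

end Aux


/-- If invertible operators `R` on `F⊗F⊗F` and `L` on `F⊗V⊗V` satisfy the
tetrahedron equation `R₁₂₃ L₁ₐᵦ L₂ₐ꜀ L₃ᵦ꜀ = L₃ᵦ꜀ L₂ₐ꜀ L₁ₐᵦ R₁₂₃`, then the
`n`-fold composed operators `𝓛₁,𝐚,𝐛 = L₁,a₁,b₁ ⋯ L₁,aₙ,bₙ` (and analogously
`𝓛₂,𝐚,𝐜`, `𝓛₃,𝐛,𝐜`) satisfy the `n`-layer tetrahedron equation on
`F⊗F⊗F⊗V^{⊗n}⊗V^{⊗n}⊗V^{⊗n}`. -/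
theorem n_layer_tetrahedron {K α β : Type*} [Field K] (n : ℕ)
    (L : Module.End K ((α × β × β) →₀ K))
    (R : Module.End K ((α × α × α) →₀ K))
    (hL : Function.Bijective L) (hR : Function.Bijective R)
    (hTE : liftOp (eR α β) R * liftOp (e1 α β) L * liftOp (e2 α β) L * liftOp (e3 α β) L =
           liftOp (e3 α β) L * liftOp (e2 α β) L * liftOp (e1 α β) L * liftOp (eR α β) R) :
    liftOp (ERn α β) R * (List.ofFn fun i : Fin n => liftOp (E1 α β i) L).prod *
        (List.ofFn fun i : Fin n => liftOp (E2 α β i) L).prod *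
        (List.ofFn fun i : Fin n => liftOp (E3 α β i) L).prod =
      (List.ofFn fun i : Fin n => liftOp (E3 α β i) L).prod *
        (List.ofFn fun i : Fin n => liftOp (E2 α β i) L).prod *
        (List.ofFn fun i : Fin n => liftOp (E1 α β i) L).prod * liftOp (ERn α β) R := by
  classical
  have hTE' : liftOp (eR α β) R * (liftOp (e1 α β) L *
        (liftOp (e2 α β) L * liftOp (e3 α β) L)) =
      liftOp (e3 α β) L * (liftOp (e2 α β) L *
        (liftOp (e1 α β) L * liftOp (eR α β) R)) := by
    simpa only [mul_assoc] using hTE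
  have hG1 : ∀ i : Fin n, liftOp (Gn α β i) (liftOp (e1 α β) L) = liftOp (E1 α β i) L := by
    intro i
    refine liftOp_liftOp _ _ _ _ (fun z => rfl) ?_
    rintro ⟨f1, f2, f3, a, b, c⟩ ⟨t1, t2, t3⟩
    simp [Gn, E1, e1]
  have hG2 : ∀ i : Fin n, liftOp (Gn α β i) (liftOp (e2 α β) L) = liftOp (E2 α β i) L := by
    intro i
    refine liftOp_liftOp _ _ _ _ (fun z => rfl) ?_
    rintro ⟨f1, f2, f3, a, b, c⟩ ⟨t1, t2, t3⟩
    simp [Gn, E2, e2]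
  have hG3 : ∀ i : Fin n, liftOp (Gn α β i) (liftOp (e3 α β) L) = liftOp (E3 α β i) L := by
    intro i
    refine liftOp_liftOp _ _ _ _ (fun z => rfl) ?_
    rintro ⟨f1, f2, f3, a, b, c⟩ ⟨t1, t2, t3⟩
    simp [Gn, E3, e3]
  have hGR : ∀ i : Fin n, liftOp (Gn α β i) (liftOp (eR α β) R) = liftOp (ERn α β) R := by
    intro i
    refine liftOp_liftOp _ _ _ _ (fun z => rfl) ?_
    rintro ⟨f1, f2, f3, a, b, c⟩ ⟨t1, t2, t3⟩
    simp [Gn, ERn, eR]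
  have hlayer : ∀ i : Fin n,
      liftOp (ERn α β) R * (liftOp (E1 α β i) L *
        (liftOp (E2 α β i) L * liftOp (E3 α β i) L)) =
      liftOp (E3 α β i) L * (liftOp (E2 α β i) L *
        (liftOp (E1 α β i) L * liftOp (ERn α β) R)) := by
    intro i
    have := congrArg (liftOp (Gn α β i)) hTE'
    simpa only [liftOp_mul, hG1 i, hG2 i, hG3 i, hGR i] using this
  have hab : ∀ i j : Fin n, i ≠ j →
      Commute (liftOp (E1 α β i) L) (liftOp (E2 α β j) L) := by
    intro i j hij
    refine liftOp_comm _ _ _ _ ?_ ?_ ?_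
    · rintro ⟨f1, f2, f3, a, b, c⟩ ⟨s1, s2, s3⟩
      simp [E1, E2, ins, del, hij.symm]
    · rintro ⟨f1, f2, f3, a, b, c⟩ ⟨s1, s2, s3⟩
      simp [E1, E2, ins, del, hij]
    · rintro ⟨f1, f2, f3, a, b, c⟩ ⟨s1, s2, s3⟩ ⟨t1, t2, t3⟩
      simp [E1, E2, ins_del_comm hij]
  have hac : ∀ i j : Fin n, i ≠ j →
      Commute (liftOp (E1 α β i) L) (liftOp (E3 α β j) L) := by
    intro i j hij
    refine liftOp_comm _ _ _ _ ?_ ?_ ?_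
    · rintro ⟨f1, f2, f3, a, b, c⟩ ⟨s1, s2, s3⟩
      simp [E1, E3, ins, del, hij.symm]
    · rintro ⟨f1, f2, f3, a, b, c⟩ ⟨s1, s2, s3⟩
      simp [E1, E3, ins, del, hij]
    · rintro ⟨f1, f2, f3, a, b, c⟩ ⟨s1, s2, s3⟩ ⟨t1, t2, t3⟩
      simp [E1, E3, ins_del_comm hij]
  have hbc : ∀ i j : Fin n, i ≠ j →
      Commute (liftOp (E2 α β i) L) (liftOp (E3 α β j) L) := by
    intro i j hij
    refine liftOp_comm _ _ _ _ ?_ ?_ ?_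
    · rintro ⟨f1, f2, f3, a, b, c⟩ ⟨s1, s2, s3⟩
      simp [E2, E3, ins, del, hij.symm]
    · rintro ⟨f1, f2, f3, a, b, c⟩ ⟨s1, s2, s3⟩
      simp [E2, E3, ins, del, hij]
    · rintro ⟨f1, f2, f3, a, b, c⟩ ⟨s1, s2, s3⟩ ⟨t1, t2, t3⟩
      simp [E2, E3, ins_del_comm hij]
  have main := list_tetra (fun i : Fin n => liftOp (E1 α β i) L)
    (fun i => liftOp (E2 α β i) L) (fun i => liftOp (E3 α β i) L)
    (liftOp (ERn α β) R) hab hac hbc hlayer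
  simpa only [mul_assoc] using main
end
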